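/- arXiv:math/0001098 — 5 statements merged into one kernel-verified Lean document; each statement's English description precedes it below -/
import Mathlib

section
/- Let s, k, L be positive integers. Suppose (ρ_{i,j})_{1≤i<j≤ks} are random variables over a probability space Ω with values in the unit circle, and U₁,…,U_{ks} is a (ρ_{i,j})-commuting family of random unitaries in a separable C*-probability space (A,φ) which is an L-mimic of a Haar family. Define X_r := (1/√k)(U_r + U_{r+s} + ⋯ + U_{r+(k-1)s}) for 1 ≤ r ≤ s. Then for every odd positive integer n < L, every r₁,…,r_n ∈ {1,…,s} and every ε(1),…,ε(n) ∈ {1,*}, one has E(X_{r₁}^{ε(1)}⋯X_{r_n}^{ε(n)}) = 0. -/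
open MeasureTheory ProbabilityTheory Filter

noncomputable section

/-- The element `r + i·s` of `{0, …, ks-1}`, used to select the summands of
`X_r = (1/√k)(U_r + U_{r+s} + ⋯ + U_{r+(k-1)s})`. -/
def idx {s k : ℕ} (r : Fin s) (i : Fin k) : Fin (k * s) :=
  ⟨r.val + i.val * s, by
    have h1 := r.isLt
    have h2 := i.isLt
    calc r.val + i.val * s < s + i.val * s := by omega
      _ = (i.val + 1) * s := by ring
      _ ≤ k * s := Nat.mul_le_mul_right s h2⟩

/-- The averaged elements `X_r := (1/√k)(U_r + U_{r+s} + ⋯ + U_{r+(k-1)s})`,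
as functions on `Ω`. -/
def Xavg {Ω : Type*} {A : Type*} [Ring A] [StarRing A] [Module ℂ A]
    {s : ℕ} (k : ℕ) (U : Fin (k * s) → Ω → unitary A) (r : Fin s) (ω : Ω) : A :=
  ((Real.sqrt k : ℂ))⁻¹ • ∑ i : Fin k, (U (idx r i) ω : A)

/-- The joint ∗-moment `E(X_{r₁}^{ε(1)} ⋯ X_{r_n}^{ε(n)})`, where
`E(f) = ∫_Ω φ(f(ω)) dP(ω)`; the value `ε m = true` encodes the symbol `1`
and `ε m = false` encodes the symbol `*` (the adjoint). -/
def momentE {Ω : Type*} [MeasurableSpace Ω] (P : Measure Ω)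
    {A : Type*} [Ring A] [StarRing A] [Module ℂ A] (φ : A →ₗ[ℂ] ℂ)
    {s : ℕ} (k : ℕ) (U : Fin (k * s) → Ω → unitary A)
    {n : ℕ} (r : Fin n → Fin s) (ε : Fin n → Bool) : ℂ :=
  ∫ ω, φ ((List.ofFn fun m : Fin n =>
      if ε m then Xavg k U (r m) ω else star (Xavg k U (r m) ω)).prod) ∂P

/-!
Each `X_r` and `X_r^*` lies in the linear span of the letters `U_j^{±1}`, so the moment is a linear
combination of `φ`-values of words `U_{j₁}^{±1} ⋯ U_{j_n}^{±1}`. Modulo the central subgroup of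
scalar unitaries the `U_j` commute, so each word is a scalar multiple of the ordered monomial
`U₁^{λ₁} ⋯ U_N^{λ_N}`, `λ` being the exponent vector of the word. As `∑ λ_j ≡ n` is odd, `λ ≠ 0`,
and `|λ_j| ≤ n < L`, so the mimic property makes every term vanish.
-/

open scoped commutatorElement IsMulCommutative Pointwise

theorem Subgroup.normal_of_le_center {G : Type*} [Group G] {Z : Subgroup G}
    (hZ : Z ≤ Subgroup.center G) : Z.Normal :=
  ⟨fun z hz g => by rwa [Subgroup.mem_center_iff.mp (hZ hz) g, mul_inv_cancel_right]⟩

theorem zpow_sum_eq_prod {κ H : Type*} [CommGroup H] (a : H) (s : Finset κ) (f : κ → ℤ) :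
    a ^ ∑ m ∈ s, f m = ∏ m ∈ s, a ^ f m := by
  simpa [← ofAdd_sum] using map_prod (zpowersHom H a) (fun m => Multiplicative.ofAdd (f m)) s

theorem Submodule.prod_ofFn_mem_pow {R A : Type*} [CommSemiring R] [Semiring A] [Algebra R A]
    (M : Submodule R A) {n : ℕ} {x : Fin n → A} (hx : ∀ m, x m ∈ M) :
    (List.ofFn x).prod ∈ M ^ n :=
  M.pow_subset_pow (Set.mem_pow.mpr ⟨fun m => ⟨x m, hx m⟩, rfl⟩)

def exponentVector {κ ι : Type*} [Fintype κ] [DecidableEq ι] (i : κ → ι) (e : κ → ℤ) :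
    ι → ℤ :=
  ∑ m, Pi.single (i m) (e m)

section exponentVector
variable {κ ι : Type*} [Fintype κ] [DecidableEq ι] (i : κ → ι) (e : κ → ℤ)

theorem exponentVector_apply (j : ι) :
    exponentVector i e j = ∑ m, if i m = j then e m else 0 := by
  simp [exponentVector, Finset.sum_apply, Pi.single_apply, eq_comm]

theorem sum_exponentVector [Fintype ι] : ∑ j, exponentVector i e j = ∑ m, e m := by
  simp only [exponentVector_apply]
  rw [Finset.sum_comm]
  simp

theorem natAbs_exponentVector_le (he : ∀ m, IsUnit (e m)) (j : ι) :
    (exponentVector i e j).natAbs ≤ Fintype.card κ := by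
  rw [exponentVector_apply]
  calc (∑ m, if i m = j then e m else 0).natAbs
      ≤ ∑ m, (if i m = j then e m else 0).natAbs := Int.natAbs_sum_le _ _
    _ ≤ ∑ _m : κ, 1 := Finset.sum_le_sum fun m _ => by
        split_ifs <;> simp [Int.isUnit_iff_natAbs_eq.mp (he m)]
    _ = Fintype.card κ := by simp

theorem exponentVector_ne_zero [Fintype ι] (he : ∀ m, IsUnit (e m))
    (hodd : Odd (Fintype.card κ)) : exponentVector i e ≠ 0 := by
  intro h0
  have hpar : Even (∑ m, (e m - 1)) :=
    Finset.even_sum _ fun m _ => by rcases Int.isUnit_iff.mp (he m) with h | h <;> simp [h]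
  rw [Finset.sum_sub_distrib, ← sum_exponentVector i, h0] at hpar
  exact Nat.not_even_iff_odd.mpr hodd (by simpa using hpar)

theorem prod_zpow_eq_prod_zpow_exponentVector [Fintype ι] {H : Type*} [CommGroup H]
    (h : ι → H) : ∏ m, h (i m) ^ e m = ∏ j, h j ^ exponentVector i e j := by
  simp only [exponentVector_apply, zpow_sum_eq_prod]
  rw [Finset.prod_comm]
  simp

end exponentVector

def orderedMonomial {G : Type*} [Group G] {N : ℕ} (g : Fin N → G) (lam : Fin N → ℤ) : G :=
  (List.ofFn fun j => g j ^ lam j).prod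

theorem orderedMonomial_inv_mul_prod_mem {G : Type*} [Group G] {Z : Subgroup G}
    (hZ : Z ≤ Subgroup.center G) {N : ℕ} (g : Fin N → G) (hg : ∀ i j, i < j → ⁅g i, g j⁆ ∈ Z)
    {n : ℕ} (i : Fin n → Fin N) (e : Fin n → ℤ) :
    (orderedMonomial g (exponentVector i e))⁻¹ * (List.ofFn fun m => g (i m) ^ e m).prod ∈ Z := by
  have := Subgroup.normal_of_le_center hZ
  let q : Fin N → G ⧸ Z := fun j => QuotientGroup.mk' Z (g j)
  have hq_lt : ∀ a b, a < b → q a * q b = q b * q a := fun a b hab => by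
    rw [← commutatorElement_eq_one_iff_mul_comm, ← map_commutatorElement, QuotientGroup.mk'_apply,
      QuotientGroup.eq_one_iff]
    exact hg a b hab
  have hq : ∀ x ∈ Set.range q, ∀ y ∈ Set.range q, x * y = y * x := by
    rintro _ ⟨a, rfl⟩ _ ⟨b, rfl⟩
    rcases lt_trichotomy a b with h | rfl | h
    exacts [hq_lt a b h, rfl, (hq_lt b a h).symm]
  -- the `q j` generate a commutative subgroup of `G ⧸ Z`, in which words can be reordered
  have := Subgroup.isMulCommutative_closure hq
  let q' : Fin N → Subgroup.closure (Set.range q) :=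
    fun j => ⟨q j, Subgroup.subset_closure ⟨j, rfl⟩⟩
  have key := congrArg (Subgroup.closure (Set.range q)).subtype
    (prod_zpow_eq_prod_zpow_exponentVector i e q').symm
  simp only [← List.prod_ofFn, map_list_prod, List.map_ofFn] at key
  rw [← QuotientGroup.eq, ← QuotientGroup.mk'_apply, ← QuotientGroup.mk'_apply, orderedMonomial,
    map_list_prod, map_list_prod, List.map_ofFn, List.map_ofFn]
  exact key

section ScalarUnitaries
variable (R : Type*) {A : Type*} [CommSemiring R] [StarRing R] [Semiring A] [StarRing A]
  [Algebra R A] [StarModule R A]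

def scalarUnitaries : Subgroup (unitary A) where
  carrier := {z | ∃ c : R, (z : A) = algebraMap R A c}
  one_mem' := ⟨1, by simp⟩
  mul_mem' := by
    rintro _ _ ⟨c, hc⟩ ⟨d, hd⟩
    exact ⟨c * d, by simp [hc, hd]⟩
  inv_mem' := by
    rintro z ⟨c, hc⟩
    exact ⟨star c, by rw [← Unitary.star_eq_inv, Unitary.coe_star, hc, algebraMap_star_comm]⟩

variable {R}

theorem scalarUnitaries_le_center : scalarUnitaries R (A := A) ≤ Subgroup.center (unitary A) := by
  rintro z ⟨c, hc⟩
  refine Subgroup.mem_center_iff.mpr fun g => Subtype.ext ?_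
  simp [hc, Algebra.commutes]

theorem commutatorElement_mem_scalarUnitaries {u v : unitary A} {c : R}
    (h : (u : A) * v = c • ((v : A) * u)) : ⁅u, v⁆ ∈ scalarUnitaries R := by
  refine ⟨c, ?_⟩
  have hu : (u : A) * star (u : A) = 1 := Unitary.mul_star_self_of_mem u.2
  have hv : (v : A) * star (v : A) = 1 := Unitary.mul_star_self_of_mem v.2
  calc ((⁅u, v⁆ : unitary A) : A) = (u : A) * v * star (u : A) * star (v : A) := by
        simp [commutatorElement_def, ← Unitary.star_eq_inv]
    _ = c • ((v : A) * (u * star (u : A)) * star (v : A)) := by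
        rw [h, smul_mul_assoc, smul_mul_assoc, mul_assoc (v : A)]
    _ = algebraMap R A c := by rw [hu, mul_one, hv, Algebra.algebraMap_eq_smul_one]

theorem coe_prod_ofFn {n : ℕ} (f : Fin n → unitary A) :
    ((List.ofFn f).prod : A) = (List.ofFn fun m => (f m : A)).prod := by
  simp [SubmonoidClass.coe_list_prod, List.map_ofFn, Function.comp_def]

theorem exists_prod_zpow_eq_smul_orderedMonomial {N : ℕ} (u : Fin N → unitary A)
    (ρ : Fin N → Fin N → R) (hu : ∀ i j, i < j → (u i : A) * u j = ρ i j • ((u j : A) * u i))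
    {n : ℕ} (i : Fin n → Fin N) (e : Fin n → ℤ) :
    ∃ c : R, (List.ofFn fun m => ((u (i m) ^ e m : unitary A) : A)).prod =
      c • ((orderedMonomial u (exponentVector i e) : unitary A) : A) := by
  obtain ⟨c, hc⟩ := orderedMonomial_inv_mul_prod_mem scalarUnitaries_le_center u
    (fun i j hij => commutatorElement_mem_scalarUnitaries (hu i j hij)) i e
  refine ⟨c, ?_⟩
  rw [← coe_prod_ofFn, ← mul_inv_cancel_left (orderedMonomial u (exponentVector i e))
    (List.ofFn fun m => u (i m) ^ e m).prod, MulMemClass.coe_mul, hc, Algebra.smul_def,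
    Algebra.commutes]

end ScalarUnitaries

section Mimic
variable {R : Type*} {A : Type*} {M : Type*} [CommSemiring R] [Semiring A] [StarRing A]
  [Algebra R A] [AddCommMonoid M] [Module R M] {N : ℕ}

def IsHaarMimic (φ : A →ₗ[R] M) (u : Fin N → unitary A) (L : ℕ) : Prop :=
  ∀ lam : Fin N → ℤ, lam ≠ 0 → (∀ j, (lam j).natAbs < L) →
    φ (List.ofFn fun j => ((u j ^ lam j : unitary A) : A)).prod = 0

theorem IsHaarMimic.map_prod_zpow_eq_zero [StarRing R] [StarModule R A] {φ : A →ₗ[R] M}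
    {u : Fin N → unitary A} {L : ℕ} (hφ : IsHaarMimic φ u L) (ρ : Fin N → Fin N → R)
    (hu : ∀ i j, i < j → (u i : A) * u j = ρ i j • ((u j : A) * u i)) {n : ℕ} (hn : Odd n)
    (hnL : n < L) (i : Fin n → Fin N) (e : Fin n → ℤ) (he : ∀ m, IsUnit (e m)) :
    φ (List.ofFn fun m => ((u (i m) ^ e m : unitary A) : A)).prod = 0 := by
  obtain ⟨c, hc⟩ := exists_prod_zpow_eq_smul_orderedMonomial u ρ hu i e
  have hne := exponentVector_ne_zero i e he (by simpa using hn)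
  have hlt j := (natAbs_exponentVector_le i e he j).trans_lt (by simpa using hnL)
  rw [hc, map_smul, orderedMonomial, coe_prod_ofFn, hφ _ hne hlt, smul_zero]

def unitaryLetters (u : Fin N → unitary A) : Set A :=
  {x | ∃ j, ∃ e : ℤ, IsUnit e ∧ ((u j ^ e : unitary A) : A) = x}

theorem star_mem_span_unitaryLetters [StarRing R] [StarModule R A] {u : Fin N → unitary A}
    {x : A} (hx : x ∈ Submodule.span R (unitaryLetters u)) :
    star x ∈ Submodule.span R (unitaryLetters u) := by
  induction hx using Submodule.span_induction with
  | mem x hx =>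
    obtain ⟨j, e, he, rfl⟩ := hx
    exact Submodule.subset_span ⟨j, -e, he.neg, by
      rw [zpow_neg, ← Unitary.star_eq_inv, Unitary.coe_star]⟩
  | zero => simp
  | add x y _ _ hx hy => rw [star_add]; exact add_mem hx hy
  | smul c x _ hx => rw [star_smul]; exact Submodule.smul_mem _ _ hx

theorem map_eq_zero_of_mem_span_unitaryLetters_pow {φ : A →ₗ[R] M} {u : Fin N → unitary A}
    {n : ℕ} (hword : ∀ (i : Fin n → Fin N) (e : Fin n → ℤ), (∀ m, IsUnit (e m)) →
      φ (List.ofFn fun m => ((u (i m) ^ e m : unitary A) : A)).prod = 0)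
    {x : A} (hx : x ∈ Submodule.span R (unitaryLetters u) ^ n) : φ x = 0 := by
  rw [Submodule.span_pow] at hx
  suffices Submodule.span R (unitaryLetters u ^ n) ≤ LinearMap.ker φ from this hx
  rw [Submodule.span_le]
  intro y hy
  obtain ⟨f, rfl⟩ := Set.mem_pow.mp hy
  choose i e he hf using fun m => (f m).2
  simpa [← hf] using hword i e he

end Mimic

theorem Xavg_mem_span_unitaryLetters {Ω A : Type*} [Ring A] [StarRing A] [Algebra ℂ A] {s k : ℕ}
    (U : Fin (k * s) → Ω → unitary A) (r : Fin s) (ω : Ω) :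
    Xavg k U r ω ∈ Submodule.span ℂ (unitaryLetters (U · ω)) :=
  Submodule.smul_mem _ _ <| Submodule.sum_mem _ fun i _ =>
    Submodule.subset_span ⟨idx r i, 1, isUnit_one, by simp⟩

theorem odd_moments_vanish_general
    (s k L : ℕ)
    -- the underlying probability space (Ω, P)
    (Ω : Type*) (mΩ : MeasurableSpace Ω)
    (P : Measure Ω)
    -- the separable C*-probability space (A, φ)
    (A : Type*) [NormedRing A] [StarRing A] [NormedAlgebra ℂ A]
    [StarModule ℂ A]
    (φ : A →ₗ[ℂ] ℂ)
    -- the unit-circle-valued random variables ρ_{i,j}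
    (ρ : Fin (k * s) → Fin (k * s) → Ω → ℂ)
    -- a (ρ_{i,j})-commuting family of random unitaries U_1, …, U_{ks}
    -- which is an L-mimic of a Haar family
    (U : Fin (k * s) → Ω → unitary A)
    (hUcomm : ∀ (i j : Fin (k * s)), i < j → ∀ ω,
      (U i ω : A) * (U j ω) = ρ i j ω • ((U j ω : A) * (U i ω)))
    (hMimic : ∀ (lam : Fin (k * s) → ℤ), lam ≠ 0 → (∀ i, (lam i).natAbs < L) →
      ∀ ω, φ ((List.ofFn fun i => ((U i ω ^ lam i : unitary A) : A)).prod) = 0) :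
    ∀ (n : ℕ), Odd n → n < L → ∀ (r : Fin n → Fin s) (ε : Fin n → Bool),
      momentE P φ k U r ε = 0 := by
  intro n hodd hnL r ε
  have hword ω : φ ((List.ofFn fun m : Fin n =>
      if ε m then Xavg k U (r m) ω else star (Xavg k U (r m) ω)).prod) = 0 := by
    have hmimic : IsHaarMimic φ (U · ω) L := fun lam hlam hlt => hMimic lam hlam hlt ω
    refine map_eq_zero_of_mem_span_unitaryLetters_pow (u := (U · ω))
      (hmimic.map_prod_zpow_eq_zero (ρ · · ω) (fun i j hij => hUcomm i j hij ω) hodd hnL)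
      (Submodule.prod_ofFn_mem_pow _ fun m => ?_)
    have hX := Xavg_mem_span_unitaryLetters U (r m) ω
    split_ifs
    exacts [hX, star_mem_span_unitaryLetters hX]
  simp [momentE, hword]

/-- **Proposition 1.6.2, part 1.** For a `(ρ_{i,j})`-commuting family of random
unitaries `U_1, …, U_{ks}` which is an `L`-mimic of a Haar family, all joint
∗-moments of the averages `X_1, …, X_s` of odd order `n < L` vanish. -/
theorem odd_moments_vanish
    (s k L : ℕ) (hs : 0 < s) (hk : 0 < k) (hL : 0 < L)
    -- the underlying probability space (Ω, P)
    (Ω : Type*) (mΩ : MeasurableSpace Ω)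
    (P : Measure Ω) (hP : IsProbabilityMeasure P)
    -- the separable C*-probability space (A, φ)
    (A : Type*) [NormedRing A] [StarRing A] [CStarRing A] [NormedAlgebra ℂ A]
    [StarModule ℂ A] [CompleteSpace A] [TopologicalSpace.SeparableSpace A]
    [MeasurableSpace A] [BorelSpace A]
    (φ : A →ₗ[ℂ] ℂ)
    (hφ1 : φ 1 = 1)
    (hφpos : ∀ a, 0 ≤ (φ (star a * a)).re ∧ (φ (star a * a)).im = 0)
    -- the unit-circle-valued random variables ρ_{i,j}
    (ρ : Fin (k * s) → Fin (k * s) → Ω → ℂ)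
    (hρmeas : ∀ i j, Measurable (ρ i j))
    (hρcirc : ∀ (i j : Fin (k * s)), i < j → ∀ ω, ‖ρ i j ω‖ = 1)
    -- a (ρ_{i,j})-commuting family of random unitaries U_1, …, U_{ks}
    -- which is an L-mimic of a Haar family
    (U : Fin (k * s) → Ω → unitary A)
    (hUmeas : ∀ i, Measurable fun ω => (U i ω : A))
    (hUcomm : ∀ (i j : Fin (k * s)), i < j → ∀ ω,
      (U i ω : A) * (U j ω) = ρ i j ω • ((U j ω : A) * (U i ω)))
    (hMimic : ∀ (lam : Fin (k * s) → ℤ), lam ≠ 0 → (∀ i, (lam i).natAbs < L) →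
      ∀ ω, φ ((List.ofFn fun i => ((U i ω ^ lam i : unitary A) : A)).prod) = 0) :
    ∀ (n : ℕ), Odd n → n < L → ∀ (r : Fin n → Fin s) (ε : Fin n → Bool),
      momentE P φ k U r ε = 0 :=
  odd_moments_vanish_general s k L Ω mΩ P A φ ρ U hUcomm hMimic
end
end

section
/- Let p be a positive integer and let π = {B₁,…,B_p} be a pairing of {1,…,2p}, with the blocks listed in increasing order of their minimal elements. Let C be a unital algebra over ℂ and let V₁,…,V_p be invertible elements of C satisfying V_l V_m = γ_{lm} V_m V_l for all 1 ≤ l < m ≤ p, where the γ_{lm} are complex numbers. Define W₁,…,W_{2p} ∈ C by W_i = V_l if i = min(B_l) and W_i = V_m^{-1} if i = max(B_m). Then W₁W₂⋯W_{2p} = (∏_{1≤l<m≤p, B_l crosses B_m} γ_{lm}) · 1. -/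
/-!
Read the word from left to right. Just before position `j` the prefix product equals a scalar
times `∏ V m` over the blocks open at `j` (those with `min B_m < j ≤ max B_m`), taken in
increasing order of `m`. Opening a block appends its letter on the right, because blocks are
numbered by their minima. Closing block `k` appends `(V k)⁻¹`, which has to travel left past the
open blocks `m > k` before it cancels `V k`; these are exactly the blocks crossing `B_k` from the
right, and each one contributes `γ k m`. Every crossing pair is therefore counted once, when its
first block closes.
-/

noncomputable section

/-- A pairing of `{0, 1, ..., 2p-1}` into `p` two-element blocks
`{lo i, hi i}`, listed in increasing order of their minimal elements. -/
structure Pairing (p : ℕ) where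
  lo : Fin p → Fin (2 * p)
  hi : Fin p → Fin (2 * p)
  lo_lt_hi : ∀ i, lo i < hi i
  lo_strictMono : StrictMono lo
  mem_unique : ∀ x : Fin (2 * p), ∃! i, x = lo i ∨ x = hi i

namespace Pairing

variable {p : ℕ}

/-- Blocks `i` and `j` of a pairing cross. -/
def Cross (π : Pairing p) (i j : Fin p) : Prop :=
  (π.lo i < π.lo j ∧ π.lo j < π.hi i ∧ π.hi i < π.hi j) ∨
  (π.lo j < π.lo i ∧ π.lo i < π.hi j ∧ π.hi j < π.hi i)

end Pairing

theorem List.exists_eq_append_cons_of_pairwise {ι : Type*} {r : ι → ι → Prop} {L : List ι}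
    (hL : L.Pairwise r) {k : ι} (hk : k ∈ L) :
    ∃ L₁ L₂, L = L₁ ++ k :: L₂ ∧ (∀ m ∈ L₁, r m k) ∧ ∀ m ∈ L₂, r k m := by
  obtain ⟨L₁, L₂, rfl⟩ := List.append_of_mem hk
  rw [List.pairwise_append, List.pairwise_cons] at hL
  exact ⟨L₁, L₂, rfl, fun m hm => hL.2.2 m hm k List.mem_cons_self, hL.2.1.1⟩

theorem List.prod_map_finRange_eq_mul_mul {M : Type*} [Monoid M] {n : ℕ} (f : Fin n → M)
    (k : Fin n) :
    ((List.finRange n).map f).prod =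
      (((List.finRange n).filter (· < k)).map f).prod * f k *
        (((List.finRange n).filter (k < ·)).map f).prod := by
  obtain ⟨L₁, L₂, hL, hL₁, hL₂⟩ := List.exists_eq_append_cons_of_pairwise
    (List.sortedLT_iff_pairwise.mp (List.sortedLT_finRange n)) (List.mem_finRange k)
  have hpre : (List.finRange n).filter (· < k) = L₁ := by
    rw [hL, List.filter_append, List.filter_eq_self.mpr (by simpa using hL₁),
      List.filter_cons_of_neg (by simp), List.filter_eq_nil_iff.mpr
        (fun m hm => by simpa using (hL₂ m hm).le), List.append_nil]
  have hsuf : (List.finRange n).filter (k < ·) = L₂ := by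
    rw [hL, List.filter_append, List.filter_eq_nil_iff.mpr
        (fun m hm => by simpa using (hL₁ m hm).le), List.filter_cons_of_neg (by simp),
      List.filter_eq_self.mpr (by simpa using hL₂), List.nil_append]
  rw [hpre, hsuf, hL, List.map_append, List.prod_append, List.map_cons, List.prod_cons, mul_assoc]

section SkewCommute

variable {R A : Type*} [CommMonoid R] [Monoid A] [MulAction R A] [IsScalarTower R A A]
  [SMulCommClass R A A]

theorem List.prod_map_mul_eq_smul_mul_prod_map {ι : Type*} (L : List ι) (g : ι → A) (c : ι → R)
    (x : A) (h : ∀ m ∈ L, g m * x = c m • (x * g m)) :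
    (L.map g).prod * x = (L.map c).prod • (x * (L.map g).prod) := by
  induction L with
  | nil => simp
  | cons a L ih =>
    simp only [List.map_cons, List.prod_cons, List.forall_mem_cons] at h ⊢
    rw [mul_assoc, ih h.2, mul_smul_comm, ← mul_assoc, h.1, smul_mul_assoc, smul_smul,
      mul_assoc, mul_comm (c a)]

theorem Units.mul_inv_eq_smul_inv_mul {u v : Aˣ} {c : R} (h : (u : A) * v = c • ((v : A) * u)) :
    (v : A) * ↑u⁻¹ = c • (↑u⁻¹ * (v : A)) := by
  calc (v : A) * ↑u⁻¹ = ↑u⁻¹ * ((u : A) * v) * ↑u⁻¹ := by rw [Units.inv_mul_cancel_left]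
    _ = c • (↑u⁻¹ * (v : A)) := by
      rw [h, mul_smul_comm, smul_mul_assoc, mul_assoc, mul_assoc, Units.mul_inv, mul_one]

end SkewCommute

namespace Pairing

variable {p : ℕ} (π : Pairing p)

theorem lo_ne_hi (l m : Fin p) : π.lo l ≠ π.hi m := by
  intro h
  obtain ⟨i, -, hi⟩ := π.mem_unique (π.hi m)
  obtain rfl : l = m := (hi l (Or.inl h.symm)).trans (hi m (Or.inr rfl)).symm
  exact (π.lo_lt_hi l).ne h

theorem hi_injective : Function.Injective π.hi := fun l m h => by
  obtain ⟨i, -, hi⟩ := π.mem_unique (π.hi m)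
  exact (hi l (Or.inr h.symm)).trans (hi m (Or.inr rfl)).symm

theorem cross_iff_of_lt {l m : Fin p} (hlm : l < m) :
    π.Cross l m ↔ π.lo m < π.hi l ∧ π.hi l < π.hi m := by
  have hlo : π.lo l < π.lo m := π.lo_strictMono hlm
  unfold Cross
  constructor
  · rintro (⟨-, h₁, h₂⟩ | ⟨h, -⟩)
    · exact ⟨h₁, h₂⟩
    · exact absurd hlo h.not_gt
  · rintro ⟨h₁, h₂⟩
    exact Or.inl ⟨hlo, h₁, h₂⟩

def openProd {M : Type*} [Monoid M] (V : Fin p → M) (j : ℕ) : M :=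
  ((List.finRange p).map fun m => if (π.lo m : ℕ) < j ∧ j ≤ π.hi m then V m else 1).prod

theorem openProd_eq_one {M : Type*} [Monoid M] (V : Fin p → M) {j : ℕ}
    (h : ∀ m, ¬((π.lo m : ℕ) < j ∧ j ≤ π.hi m)) : π.openProd V j = 1 :=
  List.prod_eq_one fun x hx => by
    obtain ⟨m, -, rfl⟩ := List.mem_map.mp hx
    exact if_neg (h m)

theorem openProd_succ_of_lo {M : Type*} [Monoid M] (V : Fin p → M) {k : Fin p} {j : ℕ}
    (hj : (π.lo k : ℕ) = j) : π.openProd V (j + 1) = π.openProd V j * V k := by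
  have hlo : ∀ m, k < m → j < π.lo m := fun m hm => hj ▸ π.lo_strictMono hm
  have hne : ∀ m, j ≠ π.hi m := fun m h => π.lo_ne_hi k m (Fin.ext (hj.trans h))
  have hk : j < π.hi k := hj ▸ π.lo_lt_hi k
  unfold openProd
  rw [List.prod_map_finRange_eq_mul_mul _ k, List.prod_map_finRange_eq_mul_mul _ k]
  have hpre : ∀ m ∈ (List.finRange p).filter (· < k),
      (if (π.lo m : ℕ) < j + 1 ∧ j + 1 ≤ π.hi m then V m else 1) =
        if (π.lo m : ℕ) < j ∧ j ≤ π.hi m then V m else 1 := fun m hm => by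
    have : (π.lo m : ℕ) < j := hj ▸ π.lo_strictMono (by simpa using hm)
    have := hne m
    exact if_congr (by omega) rfl rfl
  have hsuf : ∀ i ≤ j + 1, (((List.finRange p).filter (k < ·)).map
      fun m => if (π.lo m : ℕ) < i ∧ i ≤ π.hi m then V m else 1).prod = 1 := by
    intro i hi
    refine List.prod_eq_one fun x hx => ?_
    obtain ⟨m, hm, rfl⟩ := List.mem_map.mp hx
    have := hlo m (by simpa using hm)
    rw [if_neg (by omega)]
  rw [List.map_congr_left hpre, hsuf j (by omega), hsuf (j + 1) le_rfl, if_pos (by omega),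
    if_neg (by omega)]
  simp only [mul_one]

section Scalars

variable {R : Type*} [CommMonoid R]

open scoped Classical in
def crossFactor (γ : Fin p → Fin p → R) (l : Fin p) : R :=
  ∏ m ∈ Finset.univ.filter (fun m => l < m ∧ π.Cross l m), γ l m

theorem prod_filter_lt_open_eq_crossFactor (γ : Fin p → Fin p → R) {k : Fin p} {j : ℕ}
    (hj : (π.hi k : ℕ) = j) :
    (((List.finRange p).filter (k < ·)).map
      fun m => if (π.lo m : ℕ) < j ∧ j ≤ π.hi m then γ k m else 1).prod = π.crossFactor γ k := by
  classical
  have hfin : ((List.finRange p).filter (k < ·)).toFinset = Finset.univ.filter (k < ·) := by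
    ext; simp
  rw [← List.prod_toFinset _ ((List.nodup_finRange p).filter _), hfin, crossFactor,
    Finset.prod_filter, Finset.prod_filter]
  refine Finset.prod_congr rfl fun m _ => ?_
  by_cases hkm : k < m
  · have hhi : (π.hi k : ℕ) ≠ π.hi m := fun h => hkm.ne (π.hi_injective (Fin.ext h))
    have hlo : (π.lo k : ℕ) < π.lo m := π.lo_strictMono hkm
    have hlohi : (π.lo k : ℕ) < π.hi k := π.lo_lt_hi k
    rw [if_pos hkm]
    refine if_congr ?_ rfl rfl
    rw [π.cross_iff_of_lt hkm, and_iff_right hkm, Fin.lt_def, Fin.lt_def]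
    omega
  · rw [if_neg hkm, if_neg (fun h => hkm h.1)]

open scoped Classical in
theorem prod_crossFactor (γ : Fin p → Fin p → R) :
    ∏ l, π.crossFactor γ l =
      ∏ lm ∈ Finset.univ.filter (fun lm : Fin p × Fin p => lm.1 < lm.2 ∧ π.Cross lm.1 lm.2),
        γ lm.1 lm.2 := by
  rw [Finset.prod_filter, Fintype.prod_prod_type]
  simp only [crossFactor, Finset.prod_filter]

end Scalars

section Word

variable {R A : Type*} [CommMonoid R] [Monoid A] [MulAction R A] [IsScalarTower R A A]
  [SMulCommClass R A A] {V : Fin p → Aˣ} {γ : Fin p → Fin p → R}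

theorem openProd_mul_inv_of_hi
    (hcomm : ∀ l m : Fin p, l < m → (V l : A) * V m = γ l m • ((V m : A) * V l))
    {k : Fin p} {j : ℕ} (hj : (π.hi k : ℕ) = j) :
    π.openProd (fun m => (V m : A)) j * ↑(V k)⁻¹ =
      π.crossFactor γ k • π.openProd (fun m => (V m : A)) (j + 1) := by
  have hne : ∀ m, (π.lo m : ℕ) ≠ j := fun m h => π.lo_ne_hi m k (Fin.ext (h.trans hj.symm))
  have hk : (π.lo k : ℕ) < j := hj ▸ π.lo_lt_hi k
  have hoff : ∀ m, m ≠ k →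
      (if (π.lo m : ℕ) < j + 1 ∧ j + 1 ≤ π.hi m then (V m : A) else 1) =
        if (π.lo m : ℕ) < j ∧ j ≤ π.hi m then (V m : A) else 1 := fun m hm => by
    have := hne m
    have : (π.hi m : ℕ) ≠ j := fun h => hm (π.hi_injective (Fin.ext (h.trans hj.symm)))
    exact if_congr (by omega) rfl rfl
  unfold openProd
  rw [List.prod_map_finRange_eq_mul_mul _ k, List.prod_map_finRange_eq_mul_mul _ k]
  beta_reduce
  rw [List.map_congr_left fun m hm => hoff m (by simp at hm; exact hm.ne),
    List.map_congr_left fun m hm => hoff m (by simp at hm; exact hm.ne'),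
    if_pos (by omega), if_neg (by omega)]
  set X := (((List.finRange p).filter (· < k)).map
    fun m => if (π.lo m : ℕ) < j ∧ j ≤ π.hi m then (V m : A) else 1).prod
  set Y := (((List.finRange p).filter (k < ·)).map
    fun m => if (π.lo m : ℕ) < j ∧ j ≤ π.hi m then (V m : A) else 1).prod
  have hY : Y * ↑(V k)⁻¹ = π.crossFactor γ k • (↑(V k)⁻¹ * Y) := by
    rw [← π.prod_filter_lt_open_eq_crossFactor γ hj]
    refine List.prod_map_mul_eq_smul_mul_prod_map _ _ _ _ fun m hm => ?_
    split_ifs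
    · exact Units.mul_inv_eq_smul_inv_mul (hcomm k m (by simpa using hm))
    · simp
  calc X * V k * Y * ↑(V k)⁻¹ = X * (V k * (Y * ↑(V k)⁻¹)) := by simp only [mul_assoc]
    _ = π.crossFactor γ k • (X * 1 * Y) := by
      rw [hY, mul_smul_comm, mul_smul_comm, ← mul_assoc (V k : A), Units.mul_inv, one_mul,
        mul_one]

theorem prod_take_ofFn_eq
    (hcomm : ∀ l m : Fin p, l < m → (V l : A) * V m = γ l m • ((V m : A) * V l))
    {W : Fin (2 * p) → A} (hWlo : ∀ l, W (π.lo l) = V l) (hWhi : ∀ m, W (π.hi m) = ↑(V m)⁻¹)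
    {j : ℕ} (hj : j ≤ 2 * p) :
    ((List.ofFn W).take j).prod =
      (∏ l ∈ Finset.univ.filter (fun l => (π.hi l : ℕ) < j), π.crossFactor γ l) •
        π.openProd (fun m => (V m : A)) j := by
  induction j with
  | zero => simp [π.openProd_eq_one]
  | succ j ih =>
    rw [List.prod_take_succ _ _ (by simp; omega), ih (by omega), List.getElem_ofFn]
    obtain ⟨k, hk | hk⟩ := (π.mem_unique ⟨j, by omega⟩).exists
    · have hkj : (π.lo k : ℕ) = j := by rw [← hk]
      have hclosed : Finset.univ.filter (fun l => (π.hi l : ℕ) < j + 1) =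
          Finset.univ.filter (fun l => (π.hi l : ℕ) < j) :=
        Finset.filter_congr fun l _ => by
          have : (π.hi l : ℕ) ≠ j := fun h => π.lo_ne_hi k l (Fin.ext (hkj.trans h.symm))
          omega
      rw [hk, hWlo, hclosed, smul_mul_assoc, ← π.openProd_succ_of_lo _ hkj]
    · have hkj : (π.hi k : ℕ) = j := by rw [← hk]
      have hclosed : Finset.univ.filter (fun l => (π.hi l : ℕ) < j + 1) =
          insert k (Finset.univ.filter (fun l => (π.hi l : ℕ) < j)) := by
        ext l
        have : (π.hi l : ℕ) = j ↔ l = k :=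
          ⟨fun h => π.hi_injective (Fin.ext (h.trans hkj.symm)), fun h => h ▸ hkj⟩
        simp only [Finset.mem_filter, Finset.mem_univ, true_and, Finset.mem_insert]
        omega
      rw [hk, hWhi, hclosed, Finset.prod_insert (by simp [hkj]), smul_mul_assoc,
        π.openProd_mul_inv_of_hi hcomm hkj, smul_smul, mul_comm]

end Word

end Pairing

open scoped Classical in
theorem prod_of_pairing_word_general (p : ℕ) (π : Pairing p)
    (C : Type*) [Ring C] [Algebra ℂ C]
    (V : Fin p → Cˣ) (γ : Fin p → Fin p → ℂ)
    (hcomm : ∀ l m : Fin p, l < m → (V l : C) * (V m : C) = γ l m • ((V m : C) * (V l : C)))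
    (W : Fin (2 * p) → C)
    (hWlo : ∀ l, W (π.lo l) = V l)
    (hWhi : ∀ m, W (π.hi m) = ((V m)⁻¹ : Cˣ)) :
    (List.ofFn W).prod =
      (∏ lm ∈ Finset.univ.filter
          (fun lm : Fin p × Fin p => lm.1 < lm.2 ∧ π.Cross lm.1 lm.2),
        γ lm.1 lm.2) • (1 : C) := by
  have hword := π.prod_take_ofFn_eq hcomm hWlo hWhi le_rfl
  rwa [List.take_of_length_le (by simp), π.openProd_eq_one _ (fun m => by omega),
    Finset.filter_true_of_mem (fun l _ => by omega), π.prod_crossFactor] at hword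

open scoped Classical in
/-- **Lemma 3.2.** If `V₁, …, V_p` are invertible elements of a unital
`ℂ`-algebra satisfying `V_l V_m = γ_{lm} V_m V_l` for `l < m`, and
`W₁, …, W_{2p}` are defined by `W_i = V_l` if `i = min(B_l)` and
`W_i = V_m⁻¹` if `i = max(B_m)`, for a pairing `π = {B₁, …, B_p}` whose blocks
are listed in increasing order of their minimal elements, then
`W₁ W₂ ⋯ W_{2p} = (∏_{l < m, B_l crosses B_m} γ_{lm}) · 1`. -/
theorem prod_of_pairing_word (p : ℕ) (hp : 0 < p) (π : Pairing p)
    (C : Type*) [Ring C] [Algebra ℂ C]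
    (V : Fin p → Cˣ) (γ : Fin p → Fin p → ℂ)
    (hcomm : ∀ l m : Fin p, l < m → (V l : C) * (V m : C) = γ l m • ((V m : C) * (V l : C)))
    (W : Fin (2 * p) → C)
    (hWlo : ∀ l, W (π.lo l) = V l)
    (hWhi : ∀ m, W (π.hi m) = ((V m)⁻¹ : Cˣ)) :
    (List.ofFn W).prod =
      (∏ lm ∈ Finset.univ.filter
          (fun lm : Fin p × Fin p => lm.1 < lm.2 ∧ π.Cross lm.1 lm.2),
        γ lm.1 lm.2) • (1 : C) :=
  prod_of_pairing_word_general p π C V γ hcomm W hWlo hWhi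
end
end

section
/- Let s, k, p be positive integers, let σ be a permutation of {1,…,p}, and let t₁,…,t_p ∈ {1,…,s}. Define N(σ; t₁,…,t_p) as the number of tuples (j₁,…,j_p) with 1 ≤ j₁,…,j_p ≤ ks, such that ord(j₁,…,j_p) = σ and j_i ≡ t_i (mod s) for all i. Then binomial(k,p) ≤ N(σ; t₁,…,t_p) ≤ binomial(k+p,p). -/
/-- **Lemma 3.4.** For a permutation `σ` of `{1,…,p}` and residues
`t₁, …, t_p ∈ {1,…,s}`, the number `N(σ; t₁,…,t_p)` of tuples
`(j₁,…,j_p)` with entries in `{1,…,ks}` such that `ord(j₁,…,j_p) = σ`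
and `j_i ≡ t_i (mod s)` for all `i` satisfies
`C(k,p) ≤ N(σ; t₁,…,t_p) ≤ C(k+p,p)`.
(Here `ord(j₁,…,j_p) = σ` is expressed by `σ l < σ m ↔ j_l < j_m` for all
`l ≠ m`, which also forces the `j_i` to be distinct.) -/
theorem count_ordered_congruent_tuples
    (s k p : ℕ) (hs : 0 < s) (hk : 0 < k) (hp : 0 < p)
    (σ : Equiv.Perm (Fin p)) (t : Fin p → Fin s) :
    Nat.choose k p ≤
      Nat.card {j : Fin p → Fin (k * s) //
        (∀ l m : Fin p, l ≠ m → (σ l < σ m ↔ j l < j m)) ∧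
        ∀ i, (j i).val % s = (t i).val} ∧
    Nat.card {j : Fin p → Fin (k * s) //
        (∀ l m : Fin p, l ≠ m → (σ l < σ m ↔ j l < j m)) ∧
        ∀ i, (j i).val % s = (t i).val} ≤
      Nat.choose (k + p) p := by
  classical
  set T := {j : Fin p → Fin (k * s) //
        (∀ l m : Fin p, l ≠ m → (σ l < σ m ↔ j l < j m)) ∧
        ∀ i, (j i).val % s = (t i).val} with hT
  have hcard : Nat.card T = Fintype.card T := Nat.card_eq_fintype_card
  constructor
  · -- lower bound
    -- injection from p-element subsets of Fin k into T
    have key : ∀ (A : Finset (Fin k)) (hA : A.card = p),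
        ∃ j : T, ∀ i : Fin p,
          (j.1 i).val = ((A.orderIsoOfFin hA (σ i)) : Fin k).val * s + (t i).val := by
      intro A hA
      set e : Fin p → ℕ := fun i => ((A.orderIsoOfFin hA (σ i)) : Fin k).val with he
      have hbound : ∀ i, e i * s + (t i).val < k * s := by
        intro i
        calc e i * s + (t i).val < e i * s + s := by
              exact Nat.add_lt_add_left (t i).isLt _
          _ = (e i + 1) * s := by ring
          _ ≤ k * s := Nat.mul_le_mul_right s ((A.orderIsoOfFin hA (σ i)).1.isLt)
      refine ⟨⟨fun i => ⟨e i * s + (t i).val, hbound i⟩, ?_, ?_⟩, fun i => rfl⟩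
      · intro l m hlm
        have hstep : ∀ a b : Fin p, σ a < σ b →
            (⟨e a * s + (t a).val, hbound a⟩ : Fin (k*s)) <
            ⟨e b * s + (t b).val, hbound b⟩ := by
          intro a b hab
          have h1 : (A.orderIsoOfFin hA (σ a)) < (A.orderIsoOfFin hA (σ b)) := by
            exact (A.orderIsoOfFin hA).strictMono hab
          have h2 : e a < e b := h1
          have : e a * s + (t a).val < e b * s + (t b).val := by
            calc e a * s + (t a).val < e a * s + s := Nat.add_lt_add_left (t a).isLt _
              _ = (e a + 1) * s := by ring
              _ ≤ e b * s := Nat.mul_le_mul_right s h2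
              _ ≤ e b * s + (t b).val := Nat.le_add_right _ _
          exact this
        constructor
        · exact hstep l m
        · intro h
          by_contra hc
          have hne : σ l ≠ σ m := fun h' => hlm (σ.injective h')
          have : σ m < σ l := lt_of_le_of_ne (not_lt.mp hc) hne.symm
          exact absurd h (not_lt.mpr (le_of_lt (hstep m l this)))
      · intro i
        show (e i * s + (t i).val) % s = (t i).val
        rw [Nat.add_comm, Nat.add_mul_mod_self_right, Nat.mod_eq_of_lt (t i).isLt]
    -- build the injection
    have : Fintype.card {A : Finset (Fin k) // A.card = p} ≤ Fintype.card T := by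
      choose f hf using fun (A : {A : Finset (Fin k) // A.card = p}) => key A.1 A.2
      apply Fintype.card_le_of_injective f
      intro A B hAB
      have hvals : ∀ i : Fin p,
          ((A.1.orderIsoOfFin A.2 (σ i)) : Fin k) = ((B.1.orderIsoOfFin B.2 (σ i)) : Fin k) := by
        intro i
        have h1 := hf A i
        have h2 := hf B i
        rw [hAB] at h1
        have heq : ((A.1.orderIsoOfFin A.2 (σ i)) : Fin k).val * s
            = ((B.1.orderIsoOfFin B.2 (σ i)) : Fin k).val * s := by omega
        have := Nat.eq_of_mul_eq_mul_right hs heq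
        exact Fin.ext this
      -- deduce A = B
      have hsub : A.1 ⊆ B.1 := by
        intro x hx
        obtain ⟨y, hy⟩ := (A.1.orderIsoOfFin A.2).surjective ⟨x, hx⟩
        obtain ⟨i, hi⟩ := σ.surjective y
        have := hvals i
        rw [hi, hy] at this
        have hx' : x = ((B.1.orderIsoOfFin B.2 y) : Fin k) := this
        rw [hx']
        exact (B.1.orderIsoOfFin B.2 y).2
      have : A.1 = B.1 := Finset.eq_of_subset_of_card_le hsub (by rw [A.2, B.2])
      exact Subtype.ext this
    calc Nat.choose k p = Fintype.card {A : Finset (Fin k) // A.card = p} := by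
          rw [Fintype.card_finset_len, Fintype.card_fin]
      _ ≤ Fintype.card T := this
      _ = Nat.card T := hcard.symm
  · -- upper bound: inject T into p-element subsets of Fin (k+p)
    have : Fintype.card T ≤ Fintype.card {A : Finset (Fin (k + p)) // A.card = p} := by
      have hr : ∀ j : T, ∀ i : Fin p, (j.1 (σ.symm i)).val / s + i.val < k + p := by
        intro j i
        have h1 : (j.1 (σ.symm i)).val / s < k :=
          Nat.div_lt_of_lt_mul
            (Nat.lt_of_lt_of_le (j.1 (σ.symm i)).isLt (Nat.le_of_eq (Nat.mul_comm k s)))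
        exact Nat.add_lt_add h1 i.isLt
      set r : T → Fin p → Fin (k + p) :=
        fun j i => ⟨(j.1 (σ.symm i)).val / s + i.val, hr j i⟩ with hrdef
      have hmono : ∀ j : T, StrictMono (r j) := by
        intro j i i' hii
        have hne : σ.symm i ≠ σ.symm i' := fun h => absurd (σ.symm.injective h) (ne_of_lt hii)
        have hσ : σ (σ.symm i) < σ (σ.symm i') := by
          simpa using hii
        have hjj : j.1 (σ.symm i) < j.1 (σ.symm i') := (j.2.1 _ _ hne).mp hσ
        have hq : (j.1 (σ.symm i)).val / s ≤ (j.1 (σ.symm i')).val / s := by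
          by_contra hc
          push_neg at hc
          have h1 := Nat.div_add_mod (j.1 (σ.symm i)).val s
          have h2 := Nat.div_add_mod (j.1 (σ.symm i')).val s
          have hm1 : (j.1 (σ.symm i)).val % s < s := Nat.mod_lt _ hs
          have hm2 : (j.1 (σ.symm i')).val % s < s := Nat.mod_lt _ hs
          have hjv : (j.1 (σ.symm i)).val < (j.1 (σ.symm i')).val :=
            Fin.lt_iff_val_lt_val.mp hjj
          have e2 : (j.1 (σ.symm i')).val < (j.1 (σ.symm i)).val := by
            calc (j.1 (σ.symm i')).val
                = s * ((j.1 (σ.symm i')).val / s) + (j.1 (σ.symm i')).val % s := h2.symm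
              _ < s * ((j.1 (σ.symm i')).val / s) + s := Nat.add_lt_add_left hm2 _
              _ = s * ((j.1 (σ.symm i')).val / s + 1) := (Nat.mul_succ s _).symm
              _ ≤ s * ((j.1 (σ.symm i)).val / s) := Nat.mul_le_mul_left s hc
              _ ≤ s * ((j.1 (σ.symm i)).val / s) + (j.1 (σ.symm i)).val % s :=
                  Nat.le_add_right _ _
              _ = (j.1 (σ.symm i)).val := h1
          exact absurd hjv (Nat.not_lt.mpr (Nat.le_of_lt e2))
        have : (j.1 (σ.symm i)).val / s + i.val < (j.1 (σ.symm i')).val / s + i'.val :=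
          Nat.add_lt_add_of_le_of_lt hq hii
        exact this
      set F : T → {A : Finset (Fin (k + p)) // A.card = p} :=
        fun j => ⟨Finset.image (r j) Finset.univ, by
          rw [Finset.card_image_of_injective _ (hmono j).injective, Finset.card_univ,
            Fintype.card_fin]⟩ with hF
      apply Fintype.card_le_of_injective F
      intro a b hab
      have hreq : r a = r b := by
        have hmem : ∀ x, r a x ∈ (F b).1 := by
          intro x
          have : r a x ∈ (F a).1 := Finset.mem_image_of_mem _ (Finset.mem_univ x)
          rwa [hab] at this
        have h1 : r a = (F b).1.orderEmbOfFin (F b).2 :=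
          Finset.orderEmbOfFin_unique (F b).2 hmem (hmono a)
        have hmem' : ∀ x, r b x ∈ (F b).1 := fun x =>
          Finset.mem_image_of_mem _ (Finset.mem_univ x)
        have h2 : r b = (F b).1.orderEmbOfFin (F b).2 :=
          Finset.orderEmbOfFin_unique (F b).2 hmem' (hmono b)
        rw [h1, h2]
      -- recover j from r
      apply Subtype.ext
      funext l
      have hl := congrFun hreq (σ l)
      have hdiv : (a.1 (σ.symm (σ l))).val / s = (b.1 (σ.symm (σ l))).val / s := by
        have := congrArg Fin.val hl
        simp only [hrdef] at this
        omega
      rw [Equiv.symm_apply_apply] at hdiv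
      have hmod : (a.1 l).val % s = (b.1 l).val % s := by
        rw [a.2.2 l, b.2.2 l]
      have ha := Nat.div_add_mod (a.1 l).val s
      have hb := Nat.div_add_mod (b.1 l).val s
      rw [hdiv, hmod] at ha
      exact Fin.ext (by omega)
    calc Nat.card T = Fintype.card T := hcard
      _ ≤ Fintype.card {A : Finset (Fin (k + p)) // A.card = p} := this
      _ = Nat.choose (k + p) p := by rw [Fintype.card_finset_len, Fintype.card_fin]
end

section
/- Let C be a unital algebra over ℂ, let N and L be positive integers, let u₁,…,u_N ∈ C be invertible elements, and let (ρ_{i,j})_{1≤i<j≤N} be complex numbers of absolute value 1 such that u_i u_j = ρ_{i,j} u_j u_i for all 1 ≤ i < j ≤ N. Let φ : C → ℂ be a linear functional such that φ(u₁^{λ₁}⋯u_N^{λ_N}) = 0 for every nonzero (λ₁,…,λ_N) ∈ ℤ^N with |λ_j| < L for all j. Then for every odd positive integer n < L, all indices i₁,…,i_n ∈ {1,…,N} and all exponents ε(1),…,ε(n) ∈ {1,−1}, one has φ(u_{i₁}^{ε(1)}⋯u_{i_n}^{ε(n)}) = 0. -/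
/-!
Modulo the central subgroup of scalar units the `u_j` commute, so a word
`u_{i₁}^{ε(1)} ⋯ u_{i_n}^{ε(n)}` is a scalar multiple of the ordered monomial
`u₁^{λ₁} ⋯ u_N^{λ_N}`, where `λ_j` is the total exponent of the letter `u_j` in the word.
Then `|λ_j| ≤ n < L`, and `∑ λ_j = ∑ ε(m) ≡ n` is odd, so `λ ≠ 0` and `φ` kills the monomial.
-/

open Finset

theorem zpow_finset_sum {ι G : Type*} [CommGroup G] (a : G) (s : Finset ι) (f : ι → ℤ) :
    a ^ ∑ i ∈ s, f i = ∏ i ∈ s, a ^ f i := by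
  classical
  induction s using Finset.induction_on with
  | empty => simp
  | insert b s hb ih => rw [sum_insert hb, prod_insert hb, zpow_add, ih]

section Words

variable {N n : ℕ}

def wordExponent (i : Fin n → Fin N) (ε : Fin n → ℤ) (j : Fin N) : ℤ :=
  ∑ m with i m = j, ε m

theorem prod_ofFn_zpow_eq_prod_ofFn_zpow_wordExponent {G : Type*} [CommGroup G] (F : Fin N → G)
    (i : Fin n → Fin N) (ε : Fin n → ℤ) :
    (List.ofFn fun m => F (i m) ^ ε m).prod =
      (List.ofFn fun j => F j ^ wordExponent i ε j).prod := by
  simp only [List.prod_ofFn, wordExponent, zpow_finset_sum]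
  rw [← prod_fiberwise univ i fun m => F (i m) ^ ε m]
  refine Fintype.prod_congr _ _ fun j => prod_congr rfl fun m hm => ?_
  rw [(mem_filter.1 hm).2]

theorem prod_ofFn_zpow_eq_prod_ofFn_zpow_wordExponent_of_commute {G : Type*} [Group G]
    (F : Fin N → G) (hF : ∀ p q, Commute (F p) (F q)) (i : Fin n → Fin N) (ε : Fin n → ℤ) :
    (List.ofFn fun m => F (i m) ^ ε m).prod =
      (List.ofFn fun j => F j ^ wordExponent i ε j).prod := by
  let K := Subgroup.closure (Set.range F)
  have : IsMulCommutative K := Subgroup.isMulCommutative_closure <| by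
    rintro _ ⟨p, rfl⟩ _ ⟨q, rfl⟩
    exact hF p q
  open scoped IsMulCommutative in
  have := congrArg K.subtype <| prod_ofFn_zpow_eq_prod_ofFn_zpow_wordExponent
    (fun j => (⟨F j, Subgroup.subset_closure ⟨j, rfl⟩⟩ : K)) i ε
  simpa [map_list_prod, List.map_ofFn, Function.comp_def] using this

theorem sum_wordExponent (i : Fin n → Fin N) (ε : Fin n → ℤ) :
    ∑ j, wordExponent i ε j = ∑ m, ε m :=
  sum_fiberwise univ i ε

variable {i : Fin n → Fin N} {ε : Fin n → ℤ}

theorem wordExponent_ne_zero (hn : Odd n) (hε : ∀ m, ε m = 1 ∨ ε m = -1) :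
    wordExponent i ε ≠ 0 := by
  have hodd : Odd (∑ j, wordExponent i ε j) := by
    rw [sum_wordExponent, ← ZMod.intCast_eq_one_iff_odd, Int.cast_sum]
    have hε2 : ∀ m, ((ε m : ℤ) : ZMod 2) = 1 := fun m => by
      rcases hε m with h | h <;> simp [h]
    simp only [hε2, sum_const, card_univ, Fintype.card_fin, nsmul_eq_mul, mul_one]
    exact hn.natCast_zmod_two
  intro h
  simp [h] at hodd

theorem natAbs_wordExponent_le (hε : ∀ m, ε m = 1 ∨ ε m = -1) (j : Fin N) :
    (wordExponent i ε j).natAbs ≤ n :=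
  calc (wordExponent i ε j).natAbs ≤ ∑ m with i m = j, (ε m).natAbs := Int.natAbs_sum_le _ _
    _ ≤ ∑ m : Fin n, (ε m).natAbs := sum_le_sum_of_subset (filter_subset _ _)
    _ = n := by
        have hε1 : ∀ m, (ε m).natAbs = 1 := fun m => by rcases hε m with h | h <;> simp [h]
        simp [hε1]

end Words

section ScalarUnits

variable (R A : Type*) [CommSemiring R] [Semiring A] [Algebra R A]

def scalarUnits : Subgroup Aˣ := (Units.map (algebraMap R A : R →* A)).range

instance : (scalarUnits R A).Normal where
  conj_mem := by
    rintro _ ⟨c, rfl⟩ g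
    refine ⟨c, Units.ext ?_⟩
    simp [Algebra.commutes, mul_assoc]

variable {R A}

theorem exists_eq_smul_of_mk_eq_mk {x y : Aˣ}
    (h : (x : Aˣ ⧸ scalarUnits R A) = y) : ∃ c : R, (x : A) = c • (y : A) := by
  obtain ⟨c, hc⟩ := QuotientGroup.eq.1 h.symm
  have hx : x = y * Units.map (algebraMap R A : R →* A) c := by rw [hc, mul_inv_cancel_left]
  refine ⟨c, ?_⟩
  rw [hx, Units.val_mul, Units.coe_map, Algebra.smul_def, Algebra.commutes]
  rfl

theorem commute_mk_of_mul_eq_smul {x y : Aˣ} {ρ : R} (hρ : IsUnit ρ)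
    (h : (x : A) * y = ρ • ((y : A) * x)) :
    Commute (x : Aˣ ⧸ scalarUnits R A) y := by
  have hxy : x * y = Units.map (algebraMap R A : R →* A) hρ.unit * (y * x) := by
    ext
    simp [h, Algebra.smul_def]
  have hρ1 : ((Units.map (algebraMap R A : R →* A) hρ.unit : Aˣ) : Aˣ ⧸ scalarUnits R A) = 1 :=
    (QuotientGroup.eq_one_iff _).2 ⟨_, rfl⟩
  change ((x * y : Aˣ) : Aˣ ⧸ scalarUnits R A) = (y * x : Aˣ)
  rw [hxy, QuotientGroup.mk_mul, hρ1, one_mul]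

theorem Units.val_prod_ofFn {M : Type*} [Monoid M] {n : ℕ} (f : Fin n → Mˣ) :
    ((List.ofFn f).prod : M) = (List.ofFn fun m => (f m : M)).prod := by
  simpa [List.map_ofFn, Function.comp_def] using map_list_prod (Units.coeHom M) (List.ofFn f)

theorem exists_prod_ofFn_zpow_eq_smul {N n : ℕ} (u : Fin N → Aˣ)
    (hu : ∀ p q, Commute (u p : Aˣ ⧸ scalarUnits R A) (u q)) (i : Fin n → Fin N)
    (ε : Fin n → ℤ) :
    ∃ c : R, (List.ofFn fun m => ((u (i m) ^ ε m : Aˣ) : A)).prod =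
      c • (List.ofFn fun j => ((u j ^ wordExponent i ε j : Aˣ) : A)).prod := by
  have hmk := prod_ofFn_zpow_eq_prod_ofFn_zpow_wordExponent_of_commute _ hu i ε
  have hmk' : ((List.ofFn fun m => u (i m) ^ ε m).prod : Aˣ ⧸ scalarUnits R A) =
      (List.ofFn fun j => u j ^ wordExponent i ε j).prod := by
    simpa only [← QuotientGroup.mk'_apply, map_list_prod, List.map_ofFn, Function.comp_def,
      map_zpow] using hmk
  simpa only [Units.val_prod_ofFn] using exists_eq_smul_of_mk_eq_mk hmk'

end ScalarUnits

theorem odd_word_vanishes_general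
    (C : Type*) [Ring C] [Algebra ℂ C] (N L : ℕ)
    (u : Fin N → Cˣ) (ρ : Fin N → Fin N → ℂ)
    (hρ : ∀ i j : Fin N, i < j → ‖ρ i j‖ = 1)
    (hcomm : ∀ i j : Fin N, i < j →
      (u i : C) * (u j : C) = ρ i j • ((u j : C) * (u i : C)))
    (φ : C →ₗ[ℂ] ℂ)
    (hφ : ∀ lam : Fin N → ℤ, lam ≠ 0 → (∀ j, (lam j).natAbs < L) →
      φ ((List.ofFn fun j => ((u j ^ lam j : Cˣ) : C)).prod) = 0) :
    ∀ (n : ℕ), Odd n → n < L → ∀ (i : Fin n → Fin N) (ε : Fin n → ℤ),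
      (∀ m, ε m = 1 ∨ ε m = -1) →
      φ ((List.ofFn fun m => ((u (i m) ^ ε m : Cˣ) : C)).prod) = 0 := by
  intro n hn hnL i ε hε
  have hu : ∀ p q, Commute (u p : Cˣ ⧸ scalarUnits ℂ C) (u q) := by
    have hlt : ∀ p q, p < q → Commute (u p : Cˣ ⧸ scalarUnits ℂ C) (u q) := fun p q hpq =>
      commute_mk_of_mul_eq_smul (Ne.isUnit (norm_ne_zero_iff.1 (by simp [hρ p q hpq])))
        (hcomm p q hpq)
    intro p q
    rcases lt_trichotomy p q with hpq | rfl | hpq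
    exacts [hlt p q hpq, Commute.refl _, (hlt q p hpq).symm]
  obtain ⟨c, hc⟩ := exists_prod_ofFn_zpow_eq_smul u hu i ε
  rw [hc, map_smul, hφ _ (wordExponent_ne_zero hn hε)
    fun j => (natAbs_wordExponent_le hε j).trans_lt hnL, smul_zero]

/-- **Proposition 1.6.2, part 1 (algebraic core).** Let `u₁, …, u_N` be
invertible elements of a unital `ℂ`-algebra with `u_i u_j = ρ_{i,j} u_j u_i`
for `i < j`, where `|ρ_{i,j}| = 1`, and let `φ` be a linear functional that
kills all words `u₁^{λ₁} ⋯ u_N^{λ_N}` with `(λ₁,…,λ_N) ≠ 0` and `|λ_j| < L`.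
Then `φ` kills every word `u_{i₁}^{ε(1)} ⋯ u_{i_n}^{ε(n)}` of odd length
`n < L` with exponents `ε(m) ∈ {1, -1}`. -/
theorem odd_word_vanishes
    (C : Type*) [Ring C] [Algebra ℂ C] (N L : ℕ) (hN : 0 < N) (hL : 0 < L)
    (u : Fin N → Cˣ) (ρ : Fin N → Fin N → ℂ)
    (hρ : ∀ i j : Fin N, i < j → ‖ρ i j‖ = 1)
    (hcomm : ∀ i j : Fin N, i < j →
      (u i : C) * (u j : C) = ρ i j • ((u j : C) * (u i : C)))
    (φ : C →ₗ[ℂ] ℂ)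
    (hφ : ∀ lam : Fin N → ℤ, lam ≠ 0 → (∀ j, (lam j).natAbs < L) →
      φ ((List.ofFn fun j => ((u j ^ lam j : Cˣ) : C)).prod) = 0) :
    ∀ (n : ℕ), Odd n → n < L → ∀ (i : Fin n → Fin N) (ε : Fin n → ℤ),
      (∀ m, ε m = 1 ∨ ε m = -1) →
      φ ((List.ofFn fun m => ((u (i m) ^ ε m : Cˣ) : C)).prod) = 0 :=
  odd_word_vanishes_general C N L u ρ hρ hcomm φ hφ
end

section
/- Let p and k be integers with 1 ≤ p ≤ k. Then (k+p)^p − k^p < k^{p−1}(p+1)^p and k^p − (k−p)^p < k^{p−1}(p+1)^p. Consequently, for every integer N with binomial(k,p) ≤ N ≤ binomial(k+p,p), one has |p!·N − k^p| < k^{p−1}(p+1)^p. -/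
lemma key_ineq : ∀ p : ℕ, p ^ 2 * 2 ^ (p - 1) < (p + 1) ^ p := by
  intro p
  induction p with
  | zero => decide
  | succ n ih =>
    rcases Nat.lt_or_ge n 3 with h | h
    · interval_cases n <;> decide
    · have hn1 : 1 ≤ n := by omega
      have h2 : (2 : ℕ) ^ n = 2 * 2 ^ (n - 1) := by
        conv_lhs => rw [show n = (n - 1) + 1 by omega]
        rw [pow_succ]; ring
      have h1 : 2 * (n + 1) ≤ n ^ 2 := by nlinarith
      calc (n + 1) ^ 2 * 2 ^ (n + 1 - 1)
          = (2 * (n + 1)) * ((n + 1) * 2 ^ (n - 1)) := by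
            simp only [Nat.add_sub_cancel, h2]; ring
        _ ≤ n ^ 2 * ((n + 1) * 2 ^ (n - 1)) := by
            exact Nat.mul_le_mul_right _ h1
        _ = (n + 1) * (n ^ 2 * 2 ^ (n - 1)) := by ring
        _ < (n + 1) * (n + 1) ^ n := by
            exact mul_lt_mul_of_pos_left ih (by omega)
        _ = (n + 1) ^ (n + 1) := by rw [pow_succ]; ring
        _ ≤ (n + 1 + 1) ^ (n + 1) := Nat.pow_le_pow_left (by omega) _

lemma diff_pow_lt (p k : ℕ) (hp : 1 ≤ p) (hpk : p ≤ k) (a b : ℤ)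
    (h0 : 0 ≤ b) (ha : a ≤ 2 * k) (hb : b ≤ 2 * k) (hab : a - b = p) :
    a ^ p - b ^ p < (k : ℤ) ^ (p - 1) * ((p : ℤ) + 1) ^ p := by
  have h0a : 0 ≤ a := by
    have hp0 : (0:ℤ) ≤ p := by positivity
    linarith
  have hsum : (∑ i ∈ Finset.range p, a ^ i * b ^ (p - 1 - i)) * (a - b) = a ^ p - b ^ p :=
    geom_sum₂_mul a b p
  have hterm : ∀ i ∈ Finset.range p,
      a ^ i * b ^ (p - 1 - i) ≤ (2 * (k : ℤ)) ^ (p - 1) := by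
    intro i hi
    have hi' := Finset.mem_range.mp hi
    have h1 : a ^ i ≤ (2 * (k : ℤ)) ^ i := pow_le_pow_left₀ h0a ha i
    have h2 : b ^ (p - 1 - i) ≤ (2 * (k : ℤ)) ^ (p - 1 - i) := pow_le_pow_left₀ h0 hb _
    calc a ^ i * b ^ (p - 1 - i) ≤ (2 * (k : ℤ)) ^ i * (2 * (k : ℤ)) ^ (p - 1 - i) := by
          apply mul_le_mul h1 h2 (pow_nonneg h0 _) (by positivity)
      _ = (2 * (k : ℤ)) ^ (p - 1) := by
          rw [← pow_add]; congr 1; omega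
  have hsumle : (∑ i ∈ Finset.range p, a ^ i * b ^ (p - 1 - i))
      ≤ p * (2 * (k : ℤ)) ^ (p - 1) := by
    calc (∑ i ∈ Finset.range p, a ^ i * b ^ (p - 1 - i))
        ≤ ∑ _i ∈ Finset.range p, (2 * (k : ℤ)) ^ (p - 1) := Finset.sum_le_sum hterm
      _ = p * (2 * (k : ℤ)) ^ (p - 1) := by
          rw [Finset.sum_const, Finset.card_range]; simp
  have hk0 : (0:ℤ) < (k : ℤ) ^ (p - 1) := by
    have : 0 < k := lt_of_lt_of_le hp hpk
    positivity
  have hkey : (p : ℤ) ^ 2 * 2 ^ (p - 1) < ((p : ℤ) + 1) ^ p := by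
    have := key_ineq p
    have : ((p ^ 2 * 2 ^ (p - 1) : ℕ) : ℤ) < (((p + 1) ^ p : ℕ) : ℤ) := by exact_mod_cast this
    push_cast at this; exact this
  calc a ^ p - b ^ p = (∑ i ∈ Finset.range p, a ^ i * b ^ (p - 1 - i)) * (a - b) := hsum.symm
    _ = (∑ i ∈ Finset.range p, a ^ i * b ^ (p - 1 - i)) * p := by rw [hab]
    _ ≤ (p * (2 * (k : ℤ)) ^ (p - 1)) * p := by
        apply mul_le_mul_of_nonneg_right hsumle (by positivity)
    _ = ((p : ℤ) ^ 2 * 2 ^ (p - 1)) * (k : ℤ) ^ (p - 1) := by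
        rw [mul_pow]; ring
    _ < ((p : ℤ) + 1) ^ p * (k : ℤ) ^ (p - 1) := by
        exact mul_lt_mul_of_pos_right hkey hk0
    _ = (k : ℤ) ^ (p - 1) * ((p : ℤ) + 1) ^ p := by ring

/-- **Binomial estimates from Step 6 of Section 3.6.** For `1 ≤ p ≤ k` one has
`(k+p)^p − k^p < k^{p−1}(p+1)^p` and `k^p − (k−p)^p < k^{p−1}(p+1)^p`;
consequently every integer `N` with `C(k,p) ≤ N ≤ C(k+p,p)` satisfies
`|p!·N − k^p| < k^{p−1}(p+1)^p`. -/
theorem binomial_estimates (p k : ℕ) (hp : 1 ≤ p) (hpk : p ≤ k) :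
    (((k : ℤ) + p) ^ p - (k : ℤ) ^ p < (k : ℤ) ^ (p - 1) * ((p : ℤ) + 1) ^ p) ∧
    ((k : ℤ) ^ p - ((k : ℤ) - p) ^ p < (k : ℤ) ^ (p - 1) * ((p : ℤ) + 1) ^ p) ∧
    (∀ N : ℕ, Nat.choose k p ≤ N → N ≤ Nat.choose (k + p) p →
      |(Nat.factorial p : ℤ) * N - (k : ℤ) ^ p| <
        (k : ℤ) ^ (p - 1) * ((p : ℤ) + 1) ^ p) := by
  have hpk' : (p : ℤ) ≤ (k : ℤ) := by exact_mod_cast hpk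
  have hk0 : (0:ℤ) ≤ k := by positivity
  have h1 : ((k : ℤ) + p) ^ p - (k : ℤ) ^ p < (k : ℤ) ^ (p - 1) * ((p : ℤ) + 1) ^ p :=
    diff_pow_lt p k hp hpk ((k:ℤ) + p) k hk0 (by linarith) (by linarith) (by ring)
  have h2 : (k : ℤ) ^ p - ((k : ℤ) - p) ^ p < (k : ℤ) ^ (p - 1) * ((p : ℤ) + 1) ^ p :=
    diff_pow_lt p k hp hpk (k : ℤ) ((k:ℤ) - p) (by linarith) (by linarith)
      (by
      have hp0 : (0:ℤ) ≤ p := by positivity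
      linarith) (by ring)
  refine ⟨h1, h2, fun N hN1 hN2 => ?_⟩
  rw [abs_lt]
  constructor
  · -- lower: -(bound) < p!N - k^p, i.e. k^p - p!N < bound
    have hlow : (k - p) ^ p ≤ p.factorial * N := by
      calc (k - p) ^ p ≤ (k + 1 - p) ^ p := Nat.pow_le_pow_left (by omega) p
        _ ≤ k.descFactorial p := Nat.pow_sub_le_descFactorial k p
        _ = p.factorial * k.choose p := Nat.descFactorial_eq_factorial_mul_choose k p
        _ ≤ p.factorial * N := Nat.mul_le_mul_left _ hN1
    have hlow' : ((k : ℤ) - p) ^ p ≤ (p.factorial : ℤ) * N := by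
      have := Int.ofNat_le.mpr hlow
      push_cast at this
      rwa [Nat.cast_sub hpk] at this
    linarith
  · have hup : p.factorial * N ≤ (k + p) ^ p := by
      calc p.factorial * N ≤ p.factorial * (k + p).choose p := Nat.mul_le_mul_left _ hN2
        _ = (k + p).descFactorial p := (Nat.descFactorial_eq_factorial_mul_choose _ _).symm
        _ ≤ (k + p) ^ p := Nat.descFactorial_le_pow _ _
    have hup' : (p.factorial : ℤ) * N ≤ ((k : ℤ) + p) ^ p := by exact_mod_cast hup
    linarith
end
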